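/- arXiv:2102.04347 — 3 statements merged into one kernel-verified Lean document; each statement's English description precedes it below -/
import Mathlib

section
/- The power series ∑_{k=0}^∞ c_k z^k with coefficients c_k = (∏_{i=1}^k ∏_{j=1}^n Γ(α_{n+1} i + a_j)/Γ(α_{n+1} i + b_j)) · 1/Γ(α_{n+1} k + b_{n+1}) has infinite radius of convergence, i.e. defines an entire function of z, provided all α_j > 0. -/
open Finset Filter

/-! The partial products `∏_{i ≤ k} ∏_j Γ(α_{n+1} i + a_j) / Γ(α_{n+1} i + b_j)` are
eventually bounded: telescoping gives `b_j = a_j + α_j > a_j`, so once the arguments lie in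
`[2, ∞)`, where `Γ` is increasing, every factor has absolute value at most `1`. Hence `|c_k z^k|`
is dominated by a constant times `|z|^k / Γ(α_{n+1} k + b_{n+1})`, and this series converges
because `Γ(x) ≥ t^(x-2) / e^t` for every `t ≥ 1`: choosing `t` with `t^α_{n+1} > |z|` gives a
geometric majorant. -/

lemma Finset.sum_Icc_one_sub_pred {G : Type*} [AddCommGroup G] (f : ℕ → G) (j : ℕ) :
    ∑ m ∈ Icc 1 j, (f m - f (m - 1)) = f j - f 0 := by
  induction j with
  | zero => simp
  | succ j ih =>
    rw [sum_Icc_succ_top (by omega), ih, Nat.add_sub_cancel]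
    abel

lemma norm_prod_Icc_le_of_norm_le_one {R : Type*} [SeminormedCommRing R] {r : ℕ → R} {N : ℕ}
    (hr : ∀ i, N < i → ‖r i‖ ≤ 1) {k : ℕ} (hk : N ≤ k) :
    ‖∏ i ∈ Icc 1 k, r i‖ ≤ ‖∏ i ∈ Icc 1 N, r i‖ := by
  induction k, hk using Nat.le_induction with
  | base => exact le_rfl
  | succ k hNk ih =>
    rw [prod_Icc_succ_top (by omega)]
    calc ‖(∏ i ∈ Icc 1 k, r i) * r (k + 1)‖ ≤ ‖∏ i ∈ Icc 1 k, r i‖ * ‖r (k + 1)‖ :=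
          norm_mul_le _ _
      _ ≤ ‖∏ i ∈ Icc 1 k, r i‖ * 1 := by gcongr; exact hr _ (by omega)
      _ ≤ ‖∏ i ∈ Icc 1 N, r i‖ := by rw [mul_one]; exact ih

namespace Real

lemma abs_Gamma_div_Gamma_le_one {x y : ℝ} (hx : 2 ≤ x) (hxy : x ≤ y) :
    |Gamma x / Gamma y| ≤ 1 := by
  have hΓy : 0 < Gamma y := Gamma_pos_of_pos (by linarith)
  rw [abs_of_pos (div_pos (Gamma_pos_of_pos (by linarith)) hΓy), div_le_one hΓy]
  exact Gamma_strictMonoOn_Ici.monotoneOn hx (hx.trans hxy) hxy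

lemma pow_div_exp_le_Gamma {t x : ℝ} (ht : 1 ≤ t) (hx : 2 ≤ x) :
    t ^ (x - 2) / exp t ≤ Gamma x := by
  have h2 : 2 ≤ ⌊x⌋₊ := Nat.le_floor (by exact_mod_cast hx)
  obtain ⟨m, hm⟩ : ∃ m : ℕ, ⌊x⌋₊ = m + 1 := ⟨⌊x⌋₊ - 1, by omega⟩
  have hmx : (m : ℝ) + 1 ≤ x := by
    have := Nat.floor_le (by linarith : 0 ≤ x); rw [hm] at this; exact_mod_cast this
  have hxm : x - 2 ≤ m := by
    have := Nat.lt_floor_add_one x; rw [hm] at this; push_cast at this; linarith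
  have hm2 : (2 : ℝ) ≤ m + 1 := by
    have : 1 ≤ m := by omega
    exact_mod_cast Nat.succ_le_succ this
  calc t ^ (x - 2) / exp t ≤ t ^ m / exp t := by
        gcongr
        exact (rpow_le_rpow_of_exponent_le ht hxm).trans_eq (rpow_natCast t m)
    _ ≤ m.factorial := by
        rw [div_le_comm₀ (exp_pos t) (by positivity)]
        exact pow_div_factorial_le_exp t (by linarith) m
    _ = Gamma (m + 1) := (Gamma_nat_eq_factorial m).symm
    _ ≤ Gamma x := Gamma_strictMonoOn_Ici.monotoneOn hm2 hx hmx

end Real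

lemma eventually_le_mul_natCast_add {A : ℝ} (hA : 0 < A) (B C : ℝ) :
    ∀ᶠ k : ℕ in atTop, C ≤ A * k + B :=
  (tendsto_atTop_add_const_right _ B
    (tendsto_natCast_atTop_atTop.const_mul_atTop hA)).eventually_ge_atTop C

lemma eventually_norm_prod_Gamma_div_Gamma_le_one {ι : Type*} (s : Finset ι) {A : ℝ}
    (hA : 0 < A) {a b : ι → ℝ} (hab : ∀ j ∈ s, a j ≤ b j) :
    ∀ᶠ i : ℕ in atTop,
      ‖∏ j ∈ s, Real.Gamma (A * i + a j) / Real.Gamma (A * i + b j)‖ ≤ 1 := by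
  have hlarge : ∀ j ∈ s, ∀ᶠ i : ℕ in atTop, 2 ≤ A * i + a j := fun j _ =>
    eventually_le_mul_natCast_add hA _ 2
  filter_upwards [(eventually_all_finset s).2 hlarge] with i hi
  rw [norm_prod]
  exact prod_le_one (fun _ _ => norm_nonneg _) fun j hj =>
    Real.abs_Gamma_div_Gamma_le_one (hi j hj) (by linarith [hab j hj])

lemma summable_pow_div_Gamma_mul_add {A : ℝ} (hA : 0 < A) (B R : ℝ) :
    Summable fun k : ℕ => R ^ k / Real.Gamma (A * k + B) := by
  obtain ⟨x, hRx, hx⟩ : ∃ x : ℝ, |R| < x ^ A ∧ 1 ≤ x :=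
    (((tendsto_rpow_atTop hA).eventually_gt_atTop |R|).and (eventually_ge_atTop 1)).exists
  have hx0 : 0 < x := by linarith
  have hxA : 0 < x ^ A := by positivity
  have hq1 : |R| / x ^ A < 1 := (div_lt_one hxA).2 hRx
  refine Summable.of_norm_bounded_eventually_nat
    ((summable_geometric_of_lt_one (by positivity) hq1).mul_left (Real.exp x * x ^ (2 - B))) ?_
  filter_upwards [eventually_le_mul_natCast_add hA B 2] with k hk
  have hlow := Real.pow_div_exp_le_Gamma hx hk
  have hlow_pos : 0 < x ^ (A * k + B - 2) / Real.exp x := by positivity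
  rw [norm_div, norm_pow, Real.norm_eq_abs, Real.norm_eq_abs,
    abs_of_pos (hlow_pos.trans_le hlow)]
  calc |R| ^ k / Real.Gamma (A * k + B) ≤ |R| ^ k / (x ^ (A * k + B - 2) / Real.exp x) := by
        gcongr
    _ = Real.exp x * x ^ (2 - B) * (|R| / x ^ A) ^ k := by
        rw [div_pow, Real.rpow_sub hx0, Real.rpow_add hx0, Real.rpow_sub hx0,
          Real.rpow_mul_natCast hx0.le]
        field_simp

theorem wright_multi_param_entire_general
    (n : ℕ) (α ν : ℕ → ℝ)
    (hα0 : α 0 = 0)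
    (hα : ∀ j, 1 ≤ j → j ≤ n + 1 → 0 < α j)
    (a b : ℕ → ℝ)
    (ha : ∀ j, a j = 1 + ∑ m ∈ Icc 1 j, (ν (m - 1) - α m))
    (hb : ∀ j, b j = 1 + ∑ m ∈ Icc 1 j, (ν (m - 1) - α (m - 1)))
    (c : ℕ → ℝ)
    (hc : ∀ k, c k =
      (∏ i ∈ Icc 1 k, ∏ j ∈ Icc 1 n,
        Real.Gamma (α (n + 1) * i + a j) / Real.Gamma (α (n + 1) * i + b j)) /
      Real.Gamma (α (n + 1) * k + b (n + 1))) :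
    ∀ z : ℂ, Summable (fun k : ℕ => (c k : ℂ) * z ^ k) := by
  intro z
  have hA : 0 < α (n + 1) := hα (n + 1) (by omega) le_rfl
  have hba : ∀ j, b j = a j + α j := fun j => by
    have htel := sum_Icc_one_sub_pred α j
    rw [hα0, sub_zero] at htel
    rw [ha, hb, add_assoc, ← htel, ← sum_add_distrib]
    exact congrArg (1 + ·) (sum_congr rfl fun m _ => by ring)
  set r : ℕ → ℝ := fun i => ∏ j ∈ Icc 1 n,
    Real.Gamma (α (n + 1) * i + a j) / Real.Gamma (α (n + 1) * i + b j)
  have hab : ∀ j ∈ Icc 1 n, a j ≤ b j := fun j hj => by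
    obtain ⟨hj1, hjn⟩ := mem_Icc.1 hj
    linarith [hba j, hα j hj1 (by omega)]
  obtain ⟨N, hN⟩ :=
    eventually_atTop.1 (eventually_norm_prod_Gamma_div_Gamma_le_one (Icc 1 n) hA hab)
  have hmajorant := (summable_pow_div_Gamma_mul_add hA (b (n + 1)) ‖z‖).norm
  refine Summable.of_norm_bounded_eventually_nat (hmajorant.mul_left ‖∏ i ∈ Icc 1 N, r i‖) ?_
  filter_upwards [eventually_ge_atTop N] with k hk
  rw [norm_mul, norm_pow, Complex.norm_real, hc, norm_div, norm_div, norm_pow, norm_norm,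
    div_mul_eq_mul_div, mul_div_assoc]
  exact mul_le_mul_of_nonneg_right
    (norm_prod_Icc_le_of_norm_le_one (fun i hi => hN i hi.le) hk) (by positivity)

/-- The multi-parameter generalized Wright power series
`∑ c_k z^k` has infinite radius of convergence (defines an entire function),
provided all `α_j > 0`. -/
theorem wright_multi_param_entire
    (n : ℕ) (α ν : ℕ → ℝ)
    (hα0 : α 0 = 0) (hν0 : ν 0 = 0)
    (hα : ∀ j, 1 ≤ j → j ≤ n + 1 → 0 < α j)
    (a b : ℕ → ℝ)
    (ha : ∀ j, a j = 1 + ∑ m ∈ Icc 1 j, (ν (m - 1) - α m))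
    (hb : ∀ j, b j = 1 + ∑ m ∈ Icc 1 j, (ν (m - 1) - α (m - 1)))
    (hpos_a : ∀ i j : ℕ, 1 ≤ i → 1 ≤ j → j ≤ n → 0 < α (n + 1) * i + a j)
    (hpos_b : ∀ i j : ℕ, 1 ≤ i → 1 ≤ j → j ≤ n → 0 < α (n + 1) * i + b j)
    (hpos_bn : ∀ k : ℕ, 0 < α (n + 1) * k + b (n + 1))
    (c : ℕ → ℝ)
    (hc : ∀ k, c k =
      (∏ i ∈ Icc 1 k, ∏ j ∈ Icc 1 n,
        Real.Gamma (α (n + 1) * i + a j) / Real.Gamma (α (n + 1) * i + b j)) /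
      Real.Gamma (α (n + 1) * k + b (n + 1))) :
    ∀ z : ℂ, Summable (fun k : ℕ => (c k : ℂ) * z ^ k) :=
  wright_multi_param_entire_general n α ν hα0 hα a b ha hb c hc
end

section
/- For each n ≥ 1, the Laguerre-exponential function e_n(x) = ∑_{k≥0} x^k/(k!)^{n+1} satisfies the iterated Laguerre-derivative eigenvalue equation D_{nL} e_n = e_n, where D_{nL} = (d/dx) x (d/dx) x ⋯ x (d/dx) with n+1 derivatives and n multiplications by x. -/
/-!
Writing `e_n(x) = ∑ a_k x^k` with `a_k = 1/(k!)^{n+1}`, differentiation sends the coefficients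
`a_k` to `(k+1) a_{k+1}` and `f ↦ (x f)'` multiplies the `k`-th coefficient by `k+1`.
Hence `D_{nL} e_n` has coefficients `(k+1)^{n+1} a_{k+1} = a_k`, because `(k+1)! = (k+1) k!`.
Termwise differentiation is justified since the coefficients stay those of an entire series.
-/

/-- The iterated Laguerre derivative `D_{nL}`: `D_{0L} f = f'` and
`D_{(n+1)L} f = (d/dx)(x · (D_{nL} f)(x))`, so `D_{nL}` has `n+1`
derivatives alternating with `n` multiplications by `x`. -/
noncomputable def laguerreDeriv : ℕ → (ℝ → ℝ) → (ℝ → ℝ)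
  | 0, f => deriv f
  | n + 1, f => deriv (fun x => x * laguerreDeriv n f x)

/-- The Laguerre-exponential function `e_n(x) = ∑ x^k/(k!)^{n+1}`. -/
noncomputable def laguerreExp (n : ℕ) (x : ℝ) : ℝ :=
  ∑' k : ℕ, x ^ k / ((k.factorial : ℝ)) ^ (n + 1)

section PowerSeries

variable {c : ℕ → ℝ}

lemma summable_succ_mul_mul_pow (hc : ∀ r : ℝ, Summable fun k => c k * r ^ k) (r : ℝ) :
    Summable fun k : ℕ => ((k : ℝ) + 1) * c k * r ^ k := by
  refine .of_norm_bounded (hc (2 * |r|)).norm fun k => ?_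
  have hk : (k : ℝ) + 1 ≤ 2 ^ k := by exact_mod_cast Nat.lt_two_pow_self
  calc ‖((k : ℝ) + 1) * c k * r ^ k‖ = ((k : ℝ) + 1) * (|c k| * |r| ^ k) := by
        simp only [norm_mul, Real.norm_eq_abs, abs_pow]; rw [abs_of_nonneg (by positivity)]; ring
    _ ≤ 2 ^ k * (|c k| * |r| ^ k) := by gcongr
    _ = ‖c k * (2 * |r|) ^ k‖ := by
        simp only [norm_mul, norm_pow, Real.norm_eq_abs, abs_abs, abs_two]; ring

lemma summable_shift_mul_pow (hc : ∀ r : ℝ, Summable fun k => c k * r ^ k) (r : ℝ) :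
    Summable fun k => c (k + 1) * r ^ k := by
  set R := |r| + 1
  refine .of_norm_bounded ((summable_nat_add_iff 1).2 (hc R)).norm fun k => ?_
  have hR : |r| ^ k ≤ R ^ (k + 1) :=
    (pow_le_pow_left₀ (abs_nonneg r) (by linarith) k).trans
      (pow_le_pow_right₀ (by linarith [abs_nonneg r]) k.le_succ)
  simp only [norm_mul, Real.norm_eq_abs, abs_pow, abs_of_pos (by positivity : 0 < R)]
  gcongr

lemma summable_succ_pow_mul_mul_pow (hc : ∀ r : ℝ, Summable fun k => c k * r ^ k) (m : ℕ)
    (r : ℝ) : Summable fun k : ℕ => ((k : ℝ) + 1) ^ m * c k * r ^ k := by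
  induction m generalizing r with
  | zero => simpa using hc r
  | succ m ih => exact (summable_succ_mul_mul_pow ih r).congr fun k => by ring

theorem hasDerivAt_tsum_mul_pow (hc : ∀ r : ℝ, Summable fun k => c k * r ^ k) (x : ℝ) :
    HasDerivAt (fun y => ∑' k, c k * y ^ k) (∑' k : ℕ, ((k : ℝ) + 1) * c (k + 1) * x ^ k) x := by
  set R := |x| + 1
  have hR : 1 ≤ R := by linarith [abs_nonneg x]
  have hbound (k : ℕ) (y : ℝ) (hy : y ∈ Metric.ball 0 R) :
      ‖c k * (k * y ^ (k - 1))‖ ≤ ‖((k : ℝ) + 1) * c k * R ^ k‖ := by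
    rw [mem_ball_zero_iff, Real.norm_eq_abs] at hy
    have hyR : |y| ^ (k - 1) ≤ R ^ k :=
      (pow_le_pow_left₀ (abs_nonneg y) hy.le _).trans (pow_le_pow_right₀ hR (k.sub_le 1))
    simp only [norm_mul, norm_pow, Real.norm_eq_abs, Nat.abs_cast,
      abs_of_pos (by positivity : (0 : ℝ) < k + 1), abs_of_pos (by positivity : 0 < R)]
    calc |c k| * (k * |y| ^ (k - 1)) ≤ |c k| * ((k + 1) * R ^ k) := by gcongr; linarith
      _ = (k + 1) * |c k| * R ^ k := by ring
  have hx : x ∈ Metric.ball (0 : ℝ) R := by simp [R]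
  have hu := (summable_succ_mul_mul_pow hc R).norm
  have hderiv := hasDerivAt_tsum_of_isPreconnected hu Metric.isOpen_ball
    (convex_ball 0 R).isPreconnected (fun k y _ => (hasDerivAt_pow k y).const_mul (c k))
    hbound hx (hc x) hx
  refine hderiv.congr_deriv ?_
  rw [(Summable.of_norm_bounded hu (hbound · x hx)).tsum_eq_zero_add]
  simp only [CharP.cast_eq_zero, zero_mul, mul_zero, zero_add, Nat.cast_add, Nat.cast_one,
    add_tsub_cancel_right]
  exact tsum_congr fun k => by ring

theorem hasDerivAt_mul_tsum_mul_pow (hc : ∀ r : ℝ, Summable fun k => c k * r ^ k) (x : ℝ) :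
    HasDerivAt (fun y => y * ∑' k, c k * y ^ k) (∑' k : ℕ, ((k : ℝ) + 1) * c k * x ^ k) x := by
  refine ((hasDerivAt_id' x).mul (hasDerivAt_tsum_mul_pow hc x)).congr_deriv ?_
  have hk : Summable fun k : ℕ => (k : ℝ) * c k * x ^ k :=
    ((summable_succ_mul_mul_pow hc x).sub (hc x)).congr fun k => by ring
  calc 1 * ∑' k, c k * x ^ k + x * ∑' k : ℕ, ((k : ℝ) + 1) * c (k + 1) * x ^ k
      = ∑' k, c k * x ^ k + ∑' k : ℕ, (k : ℝ) * c k * x ^ k := by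
        rw [hk.tsum_eq_zero_add, one_mul, ← tsum_mul_left]
        simp only [CharP.cast_eq_zero, zero_mul, zero_add, Nat.cast_add, Nat.cast_one]
        congr 1
        exact tsum_congr fun k => by ring
    _ = ∑' k : ℕ, ((k : ℝ) + 1) * c k * x ^ k := by
        rw [← (hc x).tsum_add hk]
        exact tsum_congr fun k => by ring

end PowerSeries

theorem laguerreDeriv_tsum_mul_pow {c : ℕ → ℝ} (hc : ∀ r : ℝ, Summable fun k => c k * r ^ k)
    (j : ℕ) :
    laguerreDeriv j (fun y => ∑' k, c k * y ^ k)
      = fun x => ∑' k : ℕ, ((k : ℝ) + 1) ^ (j + 1) * c (k + 1) * x ^ k := by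
  induction j with
  | zero =>
    funext x
    simpa [laguerreDeriv] using (hasDerivAt_tsum_mul_pow hc x).deriv
  | succ j ih =>
    funext x
    have hc' := summable_succ_pow_mul_mul_pow (summable_shift_mul_pow hc) (j + 1)
    rw [laguerreDeriv, ih, (hasDerivAt_mul_tsum_mul_pow hc' x).deriv]
    exact tsum_congr fun k => by ring

lemma summable_inv_factorial_pow_mul_pow (n : ℕ) (r : ℝ) :
    Summable fun k => ((k.factorial : ℝ) ^ (n + 1))⁻¹ * r ^ k := by
  refine .of_norm_bounded (Real.summable_pow_div_factorial |r|) fun k => ?_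
  have hk : (1 : ℝ) ≤ k.factorial := mod_cast k.factorial_pos
  rw [norm_mul, norm_inv, norm_pow, norm_pow, Real.norm_natCast, Real.norm_eq_abs, div_eq_inv_mul]
  gcongr
  exact le_self_pow₀ hk n.succ_ne_zero

theorem laguerreExp_eigen_general (n : ℕ) :
    ∀ x : ℝ, laguerreDeriv n (laguerreExp n) x = laguerreExp n x := by
  have hexp : laguerreExp n = fun x => ∑' k, ((k.factorial : ℝ) ^ (n + 1))⁻¹ * x ^ k := by
    funext x
    exact tsum_congr fun k => div_eq_inv_mul _ _
  intro x
  rw [hexp, laguerreDeriv_tsum_mul_pow (summable_inv_factorial_pow_mul_pow n) n]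
  refine tsum_congr fun k => ?_
  rw [Nat.factorial_succ, Nat.cast_mul, mul_pow, mul_inv, Nat.cast_succ]
  field_simp

/-- for each `n ≥ 1`, the Laguerre-exponential function is an
eigenfunction of the iterated Laguerre derivative: `D_{nL} e_n = e_n`. -/
theorem laguerreExp_eigen (n : ℕ) (hn : 1 ≤ n) :
    ∀ x : ℝ, laguerreDeriv n (laguerreExp n) x = laguerreExp n x :=
  laguerreExp_eigen_general n
end

section
/- Let α, β ∈ (0,1) and ν > α, and let f(x) = ∑_{k=0}^∞ (∏_{i=1}^k Γ(β i + 1 − α)/Γ(β i + 1)) x^{β k}/Γ(β k + 1 − α + ν). Then, applying the Caputo derivatives termwise, (d^β/dx^β)(x^ν (d^α/dx^α) f(x)) = x^{ν−α} f(x) for x > 0. -/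
/-!
`wrightN1` is the generalized power series `∑ c_k x^{βk}` with `c_k = P_k / Γ(βk+1-α+ν)` and
`P_k = ∏_{i ≤ k} Γ(βi+1-α) / Γ(βi+1)`. Caputo derivatives act termwise on such series (the terms
are nonnegative, so integral and sum commute), and on a single power through the Beta integral:
`D^γ x^μ = Γ(μ+1) / Γ(μ+1-γ) x^{μ-γ}`. Under `D^α` the constant term dies and the factor
`Γ(βk+1) / Γ(βk+1-α)` turns `P_k` into `P_{k-1}`; after multiplication by `x^ν`, the factor
produced by `D^β` turns `Γ(βk+1-α+ν)` into `Γ(β(k-1)+1-α+ν)`, which gives back the series times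
`x^{ν-α}`. All series involved converge for `x > 0` by the ratio test: by Gautschi's inequality
`Γ(z+1-θ) ≤ z^{-θ} Γ(z+1)`, a consequence of the log-convexity of `Γ`, the ratios of consecutive
terms tend to `0`.
-/

open Finset

/-- The Caputo fractional derivative of order `γ ∈ (0,1)`. -/
noncomputable def caputo (γ : ℝ) (f : ℝ → ℝ) (x : ℝ) : ℝ :=
  (1 / Real.Gamma (1 - γ)) * ∫ t in (0:ℝ)..x, (x - t) ^ (-γ) * deriv f t

/-- The `n = 1` multi-parameter generalized Wright function
`f(x) = W_{α,β,ν}(x^β)`. -/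
noncomputable def wrightN1 (α β ν : ℝ) (x : ℝ) : ℝ :=
  ∑' k : ℕ,
    (∏ i ∈ Icc 1 k, Real.Gamma (β * i + 1 - α) / Real.Gamma (β * i + 1)) *
      x ^ (β * k) / Real.Gamma (β * k + 1 - α + ν)

open Set MeasureTheory Filter Topology Real

theorem Real.Gamma_add_one_sub_le {z θ : ℝ} (hz : 0 < z) (hθ0 : 0 < θ) (hθ1 : θ < 1) :
    Gamma (z + 1 - θ) ≤ Gamma (z + 1) * z ^ (-θ) := by
  have hΓ : 0 < Gamma z := Gamma_pos_of_pos hz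
  have hconvex := Gamma_mul_add_mul_le_rpow_Gamma_mul_rpow_Gamma hz (by linarith : 0 < z + 1)
    hθ0 (by linarith : 0 < 1 - θ) (by ring)
  rw [show θ * z + (1 - θ) * (z + 1) = z + 1 - θ by ring, Gamma_add_one hz.ne'] at hconvex
  refine hconvex.trans_eq ?_
  rw [Gamma_add_one hz.ne', mul_rpow hz.le hΓ.le, rpow_sub hz, rpow_sub hΓ, rpow_one, rpow_one,
    rpow_neg hz.le]
  field_simp

theorem Real.tendsto_Gamma_add_one_sub_div_Gamma_add_one {θ : ℝ} (hθ0 : 0 < θ) (hθ1 : θ < 1) :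
    Tendsto (fun z => Gamma (z + 1 - θ) / Gamma (z + 1)) atTop (𝓝 0) := by
  refine tendsto_of_tendsto_of_tendsto_of_le_of_le' tendsto_const_nhds
    (tendsto_rpow_neg_atTop hθ0) ?_ ?_ <;>
  filter_upwards [eventually_gt_atTop 0] with z hz
  · exact div_nonneg (Gamma_pos_of_pos (by linarith)).le (Gamma_pos_of_pos (by linarith)).le
  · rw [div_le_iff₀ (Gamma_pos_of_pos (by linarith)), mul_comm]
    exact Gamma_add_one_sub_le hz hθ0 hθ1

theorem intervalIntegrable_rpow_mul_sub_rpow {s t x : ℝ} (hs : 0 < s) (ht : 0 < t) (hx : 0 < x) :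
    IntervalIntegrable (fun u => u ^ (s - 1) * (x - u) ^ (t - 1)) volume 0 x := by
  have hleft : IntervalIntegrable (fun u => u ^ (s - 1) * (x - u) ^ (t - 1)) volume 0 (x / 2) := by
    refine (intervalIntegral.intervalIntegrable_rpow' (by linarith)).mul_continuousOn
      ((continuous_const.sub continuous_id).continuousOn.rpow_const fun u hu => Or.inl ?_)
    rw [Set.uIcc_of_le (by linarith)] at hu
    exact (sub_pos.2 (show u < x by linarith [hu.2])).ne'
  have hright : IntervalIntegrable (fun u => u ^ (s - 1) * (x - u) ^ (t - 1)) volume (x / 2) x := by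
    refine IntervalIntegrable.continuousOn_mul ?_
      (continuous_id.continuousOn.rpow_const fun u hu => Or.inl ?_)
    · simpa [show x - x / 2 = x / 2 by ring] using
        (intervalIntegral.intervalIntegrable_rpow' (a := x / 2) (b := 0)
          (by linarith : -1 < t - 1)).comp_sub_left x
    · rw [Set.uIcc_of_le (by linarith)] at hu
      exact (show 0 < u by linarith [hu.1]).ne'
  exact hleft.trans hright

theorem integral_rpow_mul_sub_rpow {s t x : ℝ} (hs : 0 < s) (ht : 0 < t) (hx : 0 < x) :
    ∫ u in (0:ℝ)..x, u ^ (s - 1) * (x - u) ^ (t - 1) =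
      Gamma s * Gamma t / Gamma (s + t) * x ^ (s + t - 1) := by
  have hC := Complex.betaIntegral_scaled s t hx
  rw [Complex.betaIntegral_eq_Gamma_mul_div _ _ (by simpa) (by simpa)] at hC
  apply Complex.ofReal_injective
  rw [← intervalIntegral.integral_ofReal, intervalIntegral.integral_congr
    (g := fun u : ℝ => (u : ℂ) ^ ((s : ℂ) - 1) * ((x : ℂ) - u) ^ ((t : ℂ) - 1)) ?_, hC]
  · push_cast [← Complex.Gamma_ofReal, Complex.ofReal_cpow hx.le]
    ring
  · intro u hu
    rw [Set.uIcc_of_le hx.le] at hu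
    push_cast [Complex.ofReal_cpow hu.1, Complex.ofReal_cpow (sub_nonneg.2 hu.2)]
    rfl

theorem caputo_congr_of_eqOn {γ x : ℝ} {f g : ℝ → ℝ} (h : EqOn f g (Ioi 0)) (hx : 0 ≤ x) :
    caputo γ f x = caputo γ g x := by
  rw [caputo, caputo, intervalIntegral.integral_of_le hx, intervalIntegral.integral_of_le hx,
    setIntegral_congr_fun measurableSet_Ioc fun t ht => ?_]
  rw [(h.eventuallyEq_of_mem (Ioi_mem_nhds ht.1)).deriv_eq]

theorem caputo_const_add (γ c : ℝ) (f : ℝ → ℝ) (x : ℝ) :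
    caputo γ (fun y => c + f y) x = caputo γ f x := by
  simp only [caputo, deriv_const_add]

-- Since `p ≤ exp p`, the weight `p` is absorbed by rescaling `b`.
theorem summable_mul_mul_rpow_of_summable {a p : ℕ → ℝ} (ha : ∀ k, 0 ≤ a k)
    (hp : ∀ k, 0 ≤ p k) {b : ℝ} (hb : 0 ≤ b) (h : Summable fun k => a k * (exp 1 * b) ^ p k) :
    Summable fun k => a k * p k * b ^ p k := by
  refine h.of_nonneg_of_le (fun k => by have := ha k; have := hp k; positivity) fun k => ?_
  have := ha k
  calc a k * p k * b ^ p k ≤ a k * exp (p k) * b ^ p k := by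
        gcongr; linarith [add_one_le_exp (p k)]
    _ = a k * (exp 1 * b) ^ p k := by rw [mul_rpow (exp_pos 1).le hb, exp_one_rpow]; ring

theorem hasDerivAt_tsum_rpow {a p : ℕ → ℝ} (ha : ∀ k, 0 ≤ a k) (hp : ∀ k, 0 ≤ p k)
    (hsum : ∀ b, 0 < b → Summable fun k => a k * b ^ p k) {t : ℝ} (ht : 0 < t) :
    HasDerivAt (fun y => ∑' k, a k * y ^ p k) (∑' k, a k * (p k * t ^ (p k - 1))) t := by
  have hbound : Summable fun k => a k * p k * (2 * t) ^ p k * (2 / t) :=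
    (summable_mul_mul_rpow_of_summable ha hp (by positivity) (hsum _ (by positivity))).mul_right _
  have ht_mem : t ∈ Ioo (t / 2) (2 * t) := ⟨by linarith, by linarith⟩
  refine hasDerivAt_tsum_of_isPreconnected hbound isOpen_Ioo isPreconnected_Ioo
    (g := fun k y => a k * y ^ p k) (g' := fun k y => a k * (p k * y ^ (p k - 1)))
    (fun k y hy => ?_) (fun k y hy => ?_) ht_mem (hsum t ht) ht_mem
  · exact (hasDerivAt_rpow_const (Or.inl (by linarith [hy.1] : y ≠ 0))).const_mul (a k)
  · have hy0 : 0 < y := by linarith [hy.1]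
    have := ha k
    have := hp k
    rw [norm_of_nonneg (by positivity), rpow_sub_one hy0.ne', show 2 / t = (t / 2)⁻¹ by ring]
    calc a k * (p k * (y ^ p k / y)) = a k * p k * y ^ p k * y⁻¹ := by ring
      _ ≤ a k * p k * (2 * t) ^ p k * (t / 2)⁻¹ := by gcongr <;> linarith [hy.1, hy.2]

theorem caputo_tsum_rpow {γ x : ℝ} (hγ : γ < 1) (hx : 0 < x) {a p : ℕ → ℝ}
    (ha : ∀ k, 0 ≤ a k) (hp : ∀ k, 0 < p k)
    (hsum : ∀ b, 0 < b → Summable fun k => a k * b ^ p k)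
    (hsum' : Summable fun k => a k * (Gamma (p k + 1) / Gamma (p k + 1 - γ)) * x ^ (p k - γ)) :
    caputo γ (fun y => ∑' k, a k * y ^ p k) x =
      ∑' k, a k * (Gamma (p k + 1) / Gamma (p k + 1 - γ)) * x ^ (p k - γ) := by
  have hγ' : 0 < 1 - γ := by linarith
  set F : ℕ → ℝ → ℝ := fun k t => (x - t) ^ (-γ) * (a k * (p k * t ^ (p k - 1))) with hF
  have hF_eq : ∀ k t, F k t = a k * p k * (t ^ (p k - 1) * (x - t) ^ (1 - γ - 1)) := by
    intro k t
    rw [hF, sub_sub_cancel_left]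
    ring
  have hF_int : ∀ k, IntegrableOn (F k) (Ioc 0 x) := fun k => by
    have h := (intervalIntegrable_rpow_mul_sub_rpow (hp k) hγ' hx).const_mul (a k * p k)
    rw [intervalIntegrable_iff_integrableOn_Ioc_of_le hx.le] at h
    exact h.congr_fun (fun t _ => (hF_eq k t).symm) measurableSet_Ioc
  have hF_integral : ∀ k, ∫ t in Ioc 0 x, F k t =
      Gamma (1 - γ) * (a k * (Gamma (p k + 1) / Gamma (p k + 1 - γ)) * x ^ (p k - γ)) := by
    intro k
    have hΓ := (Gamma_pos_of_pos (show 0 < p k + 1 - γ by linarith [hp k])).ne'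
    rw [← intervalIntegral.integral_of_le hx.le, funext (hF_eq k),
      intervalIntegral.integral_const_mul, integral_rpow_mul_sub_rpow (hp k) hγ' hx, Gamma_add_one (hp k).ne',
      show p k + (1 - γ) = p k + 1 - γ by ring, show p k + 1 - γ - 1 = p k - γ by ring]
    field_simp
  have hF_norm : ∀ k, ∫ t in Ioc 0 x, ‖F k t‖ = ∫ t in Ioc 0 x, F k t := fun k =>
    setIntegral_congr_fun measurableSet_Ioc fun t ht => norm_of_nonneg <|
      mul_nonneg (rpow_nonneg (sub_nonneg.2 ht.2) _)
        (mul_nonneg (ha k) (mul_nonneg (hp k).le (rpow_nonneg ht.1.le _)))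
  have hderiv : EqOn (fun t => (x - t) ^ (-γ) * deriv (fun y => ∑' k, a k * y ^ p k) t)
      (fun t => ∑' k, F k t) (Ioc 0 x) := fun t ht => by
    simp only [hF, (hasDerivAt_tsum_rpow ha (fun k => (hp k).le) hsum ht.1).deriv, tsum_mul_left]
  have hsummable : Summable fun k => ∫ t in Ioc 0 x, ‖F k t‖ := by
    simpa only [hF_norm, hF_integral] using hsum'.mul_left (Gamma (1 - γ))
  rw [caputo, intervalIntegral.integral_of_le hx.le, setIntegral_congr_fun measurableSet_Ioc hderiv,
    ← integral_tsum_of_summable_integral_norm hF_int hsummable]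
  simp only [hF_integral]
  rw [tsum_mul_left, ← mul_assoc, one_div_mul_cancel (Gamma_pos_of_pos hγ').ne', one_mul]

noncomputable def wrightProd (α β : ℝ) (k : ℕ) : ℝ :=
  ∏ i ∈ Icc 1 k, Gamma (β * i + 1 - α) / Gamma (β * i + 1)

section Wright

variable {α β ν : ℝ}

theorem wrightProd_zero (α β : ℝ) : wrightProd α β 0 = 1 := by
  simp [wrightProd]

theorem wrightProd_succ (α β : ℝ) (k : ℕ) : wrightProd α β (k + 1) =
    wrightProd α β k * (Gamma (β * (k + 1) + 1 - α) / Gamma (β * (k + 1) + 1)) := by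
  rw [wrightProd, wrightProd, prod_Icc_succ_top (Nat.le_add_left 1 k)]
  push_cast
  rfl

theorem Gamma_mul_add_one_sub_add_pos (hβ : 0 ≤ β) (hν : α < ν) {t : ℝ} (ht : 0 ≤ t) :
    0 < Gamma (β * t + 1 - α + ν) :=
  Gamma_pos_of_pos (by nlinarith [mul_nonneg hβ ht])

theorem wrightProd_pos (hα : α < 1) (hβ : 0 ≤ β) (k : ℕ) : 0 < wrightProd α β k :=
  prod_pos fun i _ => by
    have : 0 ≤ β * i := by positivity
    exact div_pos (Gamma_pos_of_pos (by linarith)) (Gamma_pos_of_pos (by linarith))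

theorem wrightProd_succ_mul_Gamma_div (hα : α < 1) (hβ : 0 ≤ β) (k : ℕ) :
    wrightProd α β (k + 1) * (Gamma (β * (k + 1) + 1) / Gamma (β * (k + 1) + 1 - α)) =
      wrightProd α β k := by
  have : 0 ≤ β * k := by positivity
  have h₁ := (Gamma_pos_of_pos (show 0 < β * (k + 1) + 1 - α by linarith)).ne'
  have h₂ := (Gamma_pos_of_pos (show 0 < β * (k + 1) + 1 by linarith)).ne'
  rw [wrightProd_succ]
  field_simp

theorem summable_wrightProd_div_Gamma (hα0 : 0 < α) (hα1 : α < 1) (hβ0 : 0 < β) (hβ1 : β < 1)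
    (hν : α < ν) (m : ℕ) {r : ℝ} (hr : 0 < r) :
    Summable fun k : ℕ => wrightProd α β k / Gamma (β * (k + m) + 1 - α + ν) * r ^ k := by
  have hΓ : ∀ k : ℕ, 0 < Gamma (β * (k + m) + 1 - α + ν) := fun k =>
    Gamma_mul_add_one_sub_add_pos hβ0.le hν (by positivity)
  have hratio : ∀ k : ℕ,
      ‖wrightProd α β (k + 1) / Gamma (β * (↑(k + 1) + m) + 1 - α + ν) * r ^ (k + 1)‖ /
        ‖wrightProd α β k / Gamma (β * (k + m) + 1 - α + ν) * r ^ k‖ =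
      Gamma (β * (k + 1) + 1 - α) / Gamma (β * (k + 1) + 1) *
        (Gamma (β * (k + m) + (β - α + ν) + 1 - β) / Gamma (β * (k + m) + (β - α + ν) + 1)) *
          r := by
    intro k
    have hP := wrightProd_pos hα1 hβ0.le
    rw [norm_of_nonneg (mul_pos (div_pos (hP _) (hΓ _)) (pow_pos hr _)).le,
      norm_of_nonneg (mul_pos (div_pos (hP _) (hΓ _)) (pow_pos hr _)).le]
    have hΓ₀ := (hΓ k).ne'
    have hΓ₁ := (hΓ (k + 1)).ne'
    have hP₀ := (hP k).ne'
    rw [wrightProd_succ, show β * (k + m) + (β - α + ν) + 1 - β = β * (k + m) + 1 - α + ν by ring,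
      show β * (k + m) + (β - α + ν) + 1 = β * (↑(k + 1) + m) + 1 - α + ν by push_cast; ring]
    field_simp
    ring
  have h₁ : Tendsto (fun k : ℕ => β * ((k : ℝ) + 1)) atTop atTop :=
    (tendsto_natCast_atTop_atTop.atTop_add tendsto_const_nhds).const_mul_atTop hβ0
  have h₂ : Tendsto (fun k : ℕ => β * ((k : ℝ) + m) + (β - α + ν)) atTop atTop :=
    ((tendsto_natCast_atTop_atTop.atTop_add tendsto_const_nhds).const_mul_atTop hβ0).atTop_add
      tendsto_const_nhds
  refine summable_of_ratio_test_tendsto_lt_one zero_lt_one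
    (Eventually.of_forall fun k => (mul_pos (div_pos (wrightProd_pos hα1 hβ0.le k) (hΓ k))
      (pow_pos hr k)).ne') ?_
  have hlim := (((tendsto_Gamma_add_one_sub_div_Gamma_add_one hα0 hα1).comp h₁).mul
    ((tendsto_Gamma_add_one_sub_div_Gamma_add_one hβ0 hβ1).comp h₂)).mul_const r
  rw [zero_mul, zero_mul] at hlim
  exact hlim.congr fun k => (hratio k).symm

theorem summable_wrightProd_div_Gamma_mul_rpow (hα0 : 0 < α) (hα1 : α < 1) (hβ0 : 0 < β)
    (hβ1 : β < 1) (hν : α < ν) (m : ℕ) (c : ℝ) {x : ℝ} (hx : 0 < x) :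
    Summable fun k : ℕ => wrightProd α β k / Gamma (β * (k + m) + 1 - α + ν) * x ^ (β * k + c) :=
  ((summable_wrightProd_div_Gamma hα0 hα1 hβ0 hβ1 hν m (rpow_pos_of_pos hx β)).mul_right
    (x ^ c)).congr fun k => by rw [rpow_add hx, rpow_mul hx.le, rpow_natCast, mul_assoc]

theorem wrightN1_eq_tsum (α β ν x : ℝ) : wrightN1 α β ν x =
    ∑' k : ℕ, wrightProd α β k / Gamma (β * k + 1 - α + ν) * x ^ (β * k) :=
  tsum_congr fun k => by rw [wrightProd]; ring

theorem wrightN1_eq_add_tsum (hα0 : 0 < α) (hα1 : α < 1) (hβ0 : 0 < β) (hβ1 : β < 1)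
    (hν : α < ν) {x : ℝ} (hx : 0 < x) :
    wrightN1 α β ν x = 1 / Gamma (1 - α + ν) +
      ∑' k : ℕ, wrightProd α β (k + 1) / Gamma (β * (k + 1) + 1 - α + ν) * x ^ (β * (k + 1)) := by
  have hsum := summable_wrightProd_div_Gamma_mul_rpow hα0 hα1 hβ0 hβ1 hν 0 0 hx
  simp only [Nat.cast_zero, add_zero] at hsum
  rw [wrightN1_eq_tsum, hsum.tsum_eq_zero_add]
  push_cast
  simp [wrightProd_zero]

theorem caputo_wrightN1 (hα0 : 0 < α) (hα1 : α < 1) (hβ0 : 0 < β) (hβ1 : β < 1)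
    (hν : α < ν) {x : ℝ} (hx : 0 < x) :
    caputo α (wrightN1 α β ν) x =
      ∑' k : ℕ, wrightProd α β k / Gamma (β * (k + 1) + 1 - α + ν) * x ^ (β * (k + 1) - α) := by
  have hcoeff : ∀ k : ℕ, wrightProd α β (k + 1) / Gamma (β * (k + 1) + 1 - α + ν) *
      (Gamma (β * (k + 1) + 1) / Gamma (β * (k + 1) + 1 - α)) =
        wrightProd α β k / Gamma (β * (k + 1) + 1 - α + ν) := fun k => by
    rw [div_mul_eq_mul_div, wrightProd_succ_mul_Gamma_div hα1 hβ0.le]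
  rw [caputo_congr_of_eqOn (fun y hy => wrightN1_eq_add_tsum hα0 hα1 hβ0 hβ1 hν hy) hx.le,
    caputo_const_add, caputo_tsum_rpow (p := fun k : ℕ => β * (k + 1)) hα1 hx
      (fun k => (div_pos (wrightProd_pos hα1 hβ0.le _)
        (Gamma_mul_add_one_sub_add_pos hβ0.le hν (by positivity))).le) (fun k => by positivity)]
  · simp only [hcoeff]
  · intro b hb
    refine ((summable_nat_add_iff 1).2
      (summable_wrightProd_div_Gamma_mul_rpow hα0 hα1 hβ0 hβ1 hν 0 0 hb)).congr fun k => ?_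
    push_cast
    ring_nf
  · refine (summable_wrightProd_div_Gamma_mul_rpow hα0 hα1 hβ0 hβ1 hν 1 (β - α) hx).congr
      fun k => ?_
    rw [hcoeff]
    push_cast
    ring_nf

theorem caputo_tsum_eq_rpow_mul_wrightN1 (hα0 : 0 < α) (hα1 : α < 1) (hβ0 : 0 < β)
    (hβ1 : β < 1) (hν : α < ν) {x : ℝ} (hx : 0 < x) :
    caputo β (fun y => ∑' k : ℕ,
      wrightProd α β k / Gamma (β * ↑(k + 1) + 1 - α + ν) * y ^ (β * (k + 1) - α + ν)) x =
        x ^ (ν - α) * wrightN1 α β ν x := by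
  have hΓ : ∀ k : ℕ, 0 < Gamma (β * k + 1 - α + ν) := fun k =>
    Gamma_mul_add_one_sub_add_pos hβ0.le hν k.cast_nonneg
  have hcoeff : ∀ k : ℕ, wrightProd α β k / Gamma (β * ↑(k + 1) + 1 - α + ν) *
      (Gamma (β * (k + 1) - α + ν + 1) / Gamma (β * (k + 1) - α + ν + 1 - β)) =
        wrightProd α β k / Gamma (β * k + 1 - α + ν) := fun k => by
    rw [show β * (k + 1) - α + ν + 1 - β = β * k + 1 - α + ν by ring,
      show β * (k + 1) - α + ν + 1 = β * ↑(k + 1) + 1 - α + ν by push_cast; ring,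
      div_mul_div_cancel₀ (hΓ _).ne']
  rw [caputo_tsum_rpow (p := fun k : ℕ => β * (k + 1) - α + ν) hβ1 hx
    (fun k => (div_pos (wrightProd_pos hα1 hβ0.le _) (hΓ _)).le)
    (fun k => by nlinarith [mul_nonneg hβ0.le k.cast_nonneg]), wrightN1_eq_tsum, ← tsum_mul_left]
  · refine tsum_congr fun k => ?_
    rw [hcoeff, show β * (k + 1) - α + ν - β = β * k + (ν - α) by ring, rpow_add hx]
    ring
  · exact fun b hb => (summable_wrightProd_div_Gamma_mul_rpow hα0 hα1 hβ0 hβ1 hν 1 (β - α + ν)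
      hb).congr fun k => by push_cast; ring_nf
  · simp only [hcoeff]
    exact (summable_wrightProd_div_Gamma_mul_rpow hα0 hα1 hβ0 hβ1 hν 0 (ν - α) hx).congr
      fun k => by push_cast; ring_nf

end Wright

/-- for `α, β ∈ (0,1)` and `ν > α`, the function
`f = W_{α,β,ν}(x^β)` satisfies `D^β (x^ν D^α f) = x^{ν−α} f` for `x > 0`. -/
theorem wrightN1_fractional_eigen (α β ν : ℝ)
    (hα0 : 0 < α) (hα1 : α < 1) (hβ0 : 0 < β) (hβ1 : β < 1) (hν : α < ν) :
    ∀ x : ℝ, 0 < x →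
      caputo β (fun y => y ^ ν * caputo α (wrightN1 α β ν) y) x =
        x ^ (ν - α) * wrightN1 α β ν x := by
  intro x hx
  have hinner : EqOn (fun y => y ^ ν * caputo α (wrightN1 α β ν) y) (fun y => ∑' k : ℕ,
      wrightProd α β k / Gamma (β * ↑(k + 1) + 1 - α + ν) * y ^ (β * (k + 1) - α + ν)) (Ioi 0) :=
    fun y hy => by
      simp only [caputo_wrightN1 hα0 hα1 hβ0 hβ1 hν hy, ← tsum_mul_left, rpow_add hy]
      push_cast
      ring_nf
  rw [caputo_congr_of_eqOn hinner hx.le, caputo_tsum_eq_rpow_mul_wrightN1 hα0 hα1 hβ0 hβ1 hν hx]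
end
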